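/- arXiv:2303.04776 — 2 statements merged into one kernel-verified Lean document; each statement's English description precedes it below -/
import Mathlib

section
/- For a permutation σ of order k and an integer n ≥ k, every row sum of the n×n fuzzy permutation matrix F_σ^{↑n} equals (n−1)!/(k−1)!. In particular, the first row sum Σ_{y=1}^{n} F_σ^{↑n}(1,y) = (n−1)!/(k−1)!. -/
open scoped Classical

/-- `f^{↑n}_{k,j}(x) = C(x−1, j−1)·C(n−x, k−j)`. -/
def fAux (n k j x : ℕ) : ℕ := Nat.choose (x - 1) (j - 1) * Nat.choose (n - x) (k - j)

/-- The `(x,y)` entry (1-indexed) of the `n×n` fuzzy permutation matrix `F_σ^{↑n}`. -/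
noncomputable def fuzzy {k : ℕ} (σ : Equiv.Perm (Fin k)) (n : ℕ) (x y : ℕ) : ℝ :=
  ((n - k).factorial : ℝ) / (n.choose k : ℝ) *
    ∑ j : Fin k, (fAux n k (j.val + 1) x : ℝ) * (fAux n k ((σ j).val + 1) y : ℝ)

lemma sum_range_choose_eq (b m : ℕ) :
    ∑ t ∈ Finset.range (m + 1), t.choose b = (m + 1).choose (b + 1) := by
  rcases le_or_gt b m with h | h
  · rw [← Nat.sum_Icc_choose m b]
    rw [show Finset.range (m + 1) = Finset.Icc 0 m by
      rw [← Finset.Ico_add_one_right_eq_Icc, Finset.range_eq_Ico]]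
    rw [← Finset.sum_subset (Finset.Icc_subset_Icc_left (Nat.zero_le b))]
    intro t ht hnt
    simp only [Finset.mem_Icc] at ht hnt
    exact Nat.choose_eq_zero_of_lt (by omega)
  · rw [Nat.choose_eq_zero_of_lt (by omega)]
    apply Finset.sum_eq_zero
    intro t ht
    simp only [Finset.mem_range] at ht
    exact Nat.choose_eq_zero_of_lt (by omega)

/-- Hockey-stick style convolution. -/
lemma hockey (b : ℕ) : ∀ a m : ℕ,
    ∑ t ∈ Finset.range (m + 1), t.choose a * (m - t).choose b
      = (m + 1).choose (a + b + 1) := by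
  intro a
  induction a with
  | zero =>
    intro m
    simp only [Nat.choose_zero_right, one_mul, Nat.zero_add]
    rw [← Finset.sum_range_reflect]
    rw [← sum_range_choose_eq b m]
    apply Finset.sum_congr rfl
    intro t ht
    simp only [Finset.mem_range] at ht
    congr 1
    omega
  | succ a ih =>
    intro m
    induction m with
    | zero =>
      simp [Nat.choose_eq_zero_of_lt (show 1 < a + 1 + b + 1 by omega)]
    | succ m ihm =>
      rw [Finset.sum_range_succ']
      have key : ∀ t ∈ Finset.range (m + 1),
          (t + 1).choose (a + 1) * (m + 1 - (t + 1)).choose b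
            = t.choose (a + 1) * (m - t).choose b + t.choose a * (m - t).choose b := by
        intro t ht
        rw [Nat.choose_succ_succ, add_mul, show m + 1 - (t + 1) = m - t by omega]
        ring
      rw [Finset.sum_congr rfl key, Finset.sum_add_distrib, ihm, ih m]
      rw [show a + 1 + b + 1 = (a + b + 1) + 1 by ring, Nat.choose_succ_succ (m + 1) (a + b + 1)]
      simp [Nat.choose_eq_zero_of_lt (Nat.succ_pos a), Nat.add_comm]

/-- Column-sum of `fAux`. -/
lemma fAux_sum_y (n k j : ℕ) (hj1 : 1 ≤ j) (hjk : j ≤ k) (hkn : k ≤ n) :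
    ∑ y ∈ Finset.Icc 1 n, fAux n k j y = n.choose k := by
  have h1 : Finset.Icc 1 n = Finset.Ico 1 (n + 1) := by rw [Finset.Ico_add_one_right_eq_Icc]
  rw [h1, Finset.sum_Ico_eq_sum_range]
  simp only [Nat.add_sub_cancel]
  have hn1 : 1 ≤ n := le_trans hj1 (le_trans hjk hkn)
  have h2 : ∀ t ∈ Finset.range n,
      fAux n k (1 + t) = fAux n k (1 + t) := fun _ _ => rfl
  have h3 : ∑ t ∈ Finset.range n, fAux n k j (1 + t)
      = ∑ t ∈ Finset.range ((n - 1) + 1), t.choose (j - 1) * ((n - 1) - t).choose (k - j) := by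
    rw [show (n - 1) + 1 = n by omega]
    apply Finset.sum_congr rfl
    intro t ht
    simp only [Finset.mem_range] at ht
    unfold fAux
    congr 2 <;> omega
  rw [h3, hockey (k - j) (j - 1) (n - 1)]
  congr 1 <;> omega

theorem stmt_6 (k n : ℕ) (hk : 1 ≤ k) (hkn : k ≤ n) (σ : Equiv.Perm (Fin k)) :
    ∀ x ∈ Finset.Icc 1 n, ∑ y ∈ Finset.Icc 1 n, fuzzy σ n x y =
      ((n - 1).factorial : ℝ) / ((k - 1).factorial : ℝ) := by
  intro x hx
  simp only [Finset.mem_Icc] at hx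
  obtain ⟨hx1, hxn⟩ := hx
  have hA : ∑ j : Fin k, fAux n k (j.val + 1) x = (n - 1).choose (k - 1) := by
    have hV := Nat.add_choose_eq (x - 1) (n - x) (k - 1)
    rw [Finset.Nat.sum_antidiagonal_eq_sum_range_succ_mk] at hV
    rw [show x - 1 + (n - x) = n - 1 by omega] at hV
    rw [hV, Fin.sum_univ_eq_sum_range (fun j => fAux n k (j + 1) x) k,
      show (k - 1).succ = k by omega]
    apply Finset.sum_congr rfl
    intro j hj
    simp only [Finset.mem_range] at hj
    unfold fAux
    congr 2 <;> omega
  unfold fuzzy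
  rw [← Finset.mul_sum, Finset.sum_comm]
  have step : ∀ j : Fin k,
      ∑ y ∈ Finset.Icc 1 n, (fAux n k (j.val + 1) x : ℝ) * (fAux n k ((σ j).val + 1) y : ℝ)
        = (fAux n k (j.val + 1) x : ℝ) * (n.choose k : ℝ) := by
    intro j
    rw [← Finset.mul_sum]
    congr 1
    rw [← Nat.cast_sum]
    rw [fAux_sum_y n k ((σ j).val + 1) (by omega) (by have := (σ j).isLt; omega) hkn]
  rw [Finset.sum_congr rfl fun j _ => step j, ← Finset.sum_mul, ← Nat.cast_sum, hA]
  have hC : (n.choose k : ℝ) ≠ 0 := Nat.cast_ne_zero.mpr (Nat.choose_pos hkn).ne'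
  have hF : ((k - 1).factorial : ℝ) ≠ 0 := Nat.cast_ne_zero.mpr (Nat.factorial_pos _).ne'
  rw [div_mul_eq_mul_div, div_eq_div_iff hC hF]
  have hbase := Nat.choose_mul_factorial_mul_factorial (show k - 1 ≤ n - 1 by omega)
  rw [show n - 1 - (k - 1) = n - k by omega] at hbase
  have hnat : (n - k).factorial * ((n - 1).choose (k - 1) * n.choose k) * (k - 1).factorial
      = (n - 1).factorial * n.choose k := by rw [← hbase]; ring
  have h := congrArg (fun m : ℕ => (m : ℝ)) hnat
  push_cast at h
  linear_combination h
end

section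
/- For any permutation σ of order k and n ≥ k, the cover matrix and the fuzzy permutation matrix differ by a constant matrix: A_σ^{↑n} = ((n−1)!/(k−1)!)·(1/k − 1/n)·J_n + F_σ^{↑n}, where J_n is the n×n all-ones matrix. -/
/-- A subset `s` of `[n]` is a copy of the pattern `σ` in `π`. -/
def IsCopy {k n : ℕ} (σ : Equiv.Perm (Fin k)) (π : Equiv.Perm (Fin n))
    (s : Finset (Fin n)) : Prop :=
  ∃ h : s.card = k, ∀ i j : Fin k,
    π (s.orderIsoOfFin h i).1 < π (s.orderIsoOfFin h j).1 ↔ σ i < σ j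

/-- The number of copies of `σ` in `π`. -/
noncomputable def numCopies {k n : ℕ} (σ : Equiv.Perm (Fin k)) (π : Equiv.Perm (Fin n)) : ℕ := by
  classical exact (Finset.univ.filter (IsCopy σ π)).card

/-- The pattern density of `σ` in `π`. -/
noncomputable def density {k n : ℕ} (σ : Equiv.Perm (Fin k)) (π : Equiv.Perm (Fin n)) : ℝ :=
  (numCopies σ π : ℝ) / (n.choose k : ℝ)

open scoped Classical

/-- The `(x,y)` entry of the `n×n` cover matrix `A_σ^{↑n} = Σ_π d(σ,π)·A_π`. -/
noncomputable def coverEntry {k : ℕ} (σ : Equiv.Perm (Fin k)) (n : ℕ) (x y : Fin n) : ℝ :=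
  ∑ π : Equiv.Perm (Fin n), density σ π * (if π x = y then 1 else 0)

/-!
Multiplied by `C(n, k)`, the `(x, y)` entry of the cover matrix counts the pairs `(s, π)` in which
the `k`-set `s` is a copy of `σ` in `π` and `π x = y`. Once the value set `V = π(s)` is fixed too,
being a copy means that `π` sends the `i`-th element of `s` to the `σ i`-th element of `V`, so what
is left to count are permutations prescribed on a few points: a factorial. If `x ∉ s`, we need
`y ∉ V` and `π` is prescribed on `k + 1` points, which gives the constant `C(n-1, k)² (n-k-1)!`.
If `x` is the `i`-th element of `s`, then `y` must be the `σ i`-th element of `V`; there are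
`f_{k,i}(x)` such `s` and `f_{k,σ i}(y)` such `V`, each pair contributing `(n-k)!`, and this is
the fuzzy permutation matrix.
-/

open Finset
open scoped Nat

namespace Equiv.Perm
variable {ι α : Type*} [Fintype ι] [Fintype α] [DecidableEq α]

theorem card_filter_forall_apply_eq {u v : ι → α}
    [DecidablePred fun π : Perm α => ∀ i, π (u i) = v i] (hu : u.Injective) (hv : v.Injective) :
    #{π : Perm α | ∀ i, π (u i) = v i} = (Fintype.card α - Fintype.card ι)! := by
  obtain ⟨π₀, hπ₀⟩ := Perm.exists_extending_pair u v hu hv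
  calc #{π : Perm α | ∀ i, π (u i) = v i}
      = Fintype.card {π : Perm α // ∀ i, π (u i) = v i} := (Fintype.card_subtype _).symm
    _ = Fintype.card {ρ : Perm α // ∀ a, ¬ a ∉ Set.range u → ρ a = a} :=
        Fintype.card_congr <| (Equiv.mulLeft π₀⁻¹).subtypeEquiv fun π => by
          simp only [Equiv.coe_mulLeft, Perm.coe_mul, Function.comp_apply, Perm.inv_eq_iff_eq,
            Set.mem_range, not_not, forall_exists_index, forall_apply_eq_imp_iff, hπ₀]
    _ = Fintype.card (Perm {a // a ∉ Set.range u}) :=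
        (Fintype.card_congr (Perm.subtypeEquivSubtypePerm _)).symm
    _ = _ := by rw [Fintype.card_perm, Fintype.card_subtype_compl, Set.card_range_of_injective hu]

end Equiv.Perm

namespace Finset
variable {α : Type*} [LinearOrder α] {k : ℕ}

theorem mem_iff_exists_orderEmbOfFin_eq (s : Finset α) (h : #s = k) (a : α) :
    a ∈ s ↔ ∃ i, s.orderEmbOfFin h i = a := by
  rw [← mem_coe, ← range_orderEmbOfFin s h, Set.mem_range]

theorem card_filter_lt_orderEmbOfFin (s : Finset α) (h : #s = k) (i : Fin k) :
    #{b ∈ s | b < s.orderEmbOfFin h i} = i := by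
  have : {b ∈ s | b < s.orderEmbOfFin h i} = (Iio i).map (s.orderEmbOfFin h).toEmbedding := by
    ext b
    simp only [mem_filter, mem_map, mem_Iio, s.mem_iff_exists_orderEmbOfFin_eq h]
    constructor
    · rintro ⟨⟨j, rfl⟩, hj⟩
      exact ⟨j, (s.orderEmbOfFin h).lt_iff_lt.1 hj, rfl⟩
    · rintro ⟨j, hj, rfl⟩
      exact ⟨⟨j, rfl⟩, (s.orderEmbOfFin h).lt_iff_lt.2 hj⟩
  rw [this, card_map, Fin.card_Iio]

theorem orderEmbOfFin_eq_iff (s : Finset α) (h : #s = k) (i : Fin k) (a : α) :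
    s.orderEmbOfFin h i = a ↔ a ∈ s ∧ #{b ∈ s | b < a} = i := by
  constructor
  · rintro rfl
    exact ⟨s.orderEmbOfFin_mem h i, card_filter_lt_orderEmbOfFin s h i⟩
  · rintro ⟨ha, hrank⟩
    obtain ⟨j, rfl⟩ := (s.mem_iff_exists_orderEmbOfFin_eq h a).1 ha
    rw [card_filter_lt_orderEmbOfFin, Fin.val_inj] at hrank
    rw [hrank]

variable [Fintype α] [LocallyFiniteOrderBot α] [LocallyFiniteOrderTop α]

theorem card_powersetCard_filter_mem_card_lt_eq (y : α) {j : ℕ} (hj : j < k) :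
    #{V ∈ powersetCard k univ | y ∈ V ∧ #{b ∈ V | b < y} = j} =
      (#(Iio y)).choose j * (#(Ioi y)).choose (k - 1 - j) := by
  have hrebuild : ∀ V : Finset α, y ∈ V → insert y ({b ∈ V | b < y} ∪ {b ∈ V | y < b}) = V := by
    intro V hy
    ext b
    simp only [mem_insert, mem_union, mem_filter]
    grind
  have hcard : ∀ A ⊆ Iio y, ∀ B ⊆ Ioi y, #(insert y (A ∪ B)) = #A + #B + 1 := by
    intro A hA B hB
    rw [card_insert_of_notMem, card_union_of_disjoint]
    · exact disjoint_left.2 fun b hbA hbB => (mem_Iio.1 (hA hbA)).not_gt (mem_Ioi.1 (hB hbB))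
    · simp only [mem_union, not_or]
      exact ⟨fun h => (mem_Iio.1 (hA h)).false, fun h => (mem_Ioi.1 (hB h)).false⟩
  have hparts : ∀ A ⊆ Iio y, ∀ B ⊆ Ioi y,
      {b ∈ insert y (A ∪ B) | b < y} = A ∧ {b ∈ insert y (A ∪ B) | y < b} = B := by
    intro A hA B hB
    constructor <;> ext b <;> simp only [mem_filter, mem_insert, mem_union] <;> grind
  rw [← card_powersetCard, ← card_powersetCard, ← card_product]
  refine card_nbij' (fun V => ({b ∈ V | b < y}, {b ∈ V | y < b}))
    (fun p => insert y (p.1 ∪ p.2)) ?_ ?_ ?_ ?_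
  · intro V hV
    simp only [coe_filter, mem_powersetCard, subset_univ, true_and, Set.mem_ofPred_eq] at hV
    obtain ⟨hk, hy, hrank⟩ := hV
    have hlt : {b ∈ V | b < y} ⊆ Iio y := fun b hb => mem_Iio.2 (mem_filter.1 hb).2
    have hgt : {b ∈ V | y < b} ⊆ Ioi y := fun b hb => mem_Ioi.2 (mem_filter.1 hb).2
    have := hcard _ hlt _ hgt
    rw [hrebuild V hy] at this
    simp only [mem_coe, mem_product, mem_powersetCard]
    exact ⟨⟨hlt, hrank⟩, hgt, by omega⟩
  · rintro ⟨A, B⟩ hAB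
    simp only [mem_coe, mem_product, mem_powersetCard] at hAB
    obtain ⟨⟨hA, hAc⟩, hB, hBc⟩ := hAB
    simp only [coe_filter, mem_powersetCard, subset_univ, true_and, Set.mem_ofPred_eq,
      mem_insert_self, (hparts A hA B hB).1, hcard A hA B hB]
    omega
  · intro V hV
    simp only [coe_filter, mem_powersetCard, subset_univ, true_and, Set.mem_ofPred_eq] at hV
    exact hrebuild V hV.2.1
  · rintro ⟨A, B⟩ hAB
    simp only [mem_coe, mem_product, mem_powersetCard] at hAB
    exact Prod.ext_iff.2 (hparts A hAB.1.1 B hAB.2.1)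

end Finset

theorem Nat.cast_choose_pred_sq_mul_factorial_div_choose {k n : ℕ} (hk : 1 ≤ k) (hkn : k ≤ n) :
    (((n - 1).choose k * ((n - 1).choose k * (n - (k + 1))!) : ℕ) : ℝ) / n.choose k =
      (n - 1)! / (k - 1)! * (1 / k - 1 / n) := by
  push_cast
  obtain rfl | hlt := hkn.eq_or_lt
  · simp [Nat.choose_eq_zero_of_lt (Nat.sub_lt hk one_pos)]
  obtain ⟨m, rfl⟩ : ∃ m, n = m + 1 := ⟨n - 1, by omega⟩
  obtain ⟨j, rfl⟩ : ∃ j, k = j + 1 := ⟨k - 1, by omega⟩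
  have hfact : ((m.choose (j + 1) * (j + 1)! * (m - (j + 1))! : ℕ) : ℝ) = m ! :=
    congrArg _ (Nat.choose_mul_factorial_mul_factorial (by omega))
  have hsucc :
      ((m.choose (j + 1) * (m + 1) : ℕ) : ℝ) = ((m + 1).choose (j + 1) * (m - j) : ℕ) := by
    rw [Nat.choose_mul_succ_eq, show m + 1 - (j + 1) = m - j by omega]
  have hC : ((m + 1).choose (j + 1) : ℝ) ≠ 0 := Nat.cast_ne_zero.2 (Nat.choose_pos hkn).ne'
  rw [show m + 1 - (j + 1 + 1) = m - (j + 1) by omega]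
  simp only [Nat.add_sub_cancel, Nat.factorial_succ, Nat.cast_mul] at hfact hsucc ⊢
  rw [Nat.cast_sub (by omega : j ≤ m)] at hsucc
  field_simp
  push_cast at hfact hsucc ⊢
  linear_combination (m.choose (j + 1) * (m + 1) : ℝ) * hfact + (m ! : ℝ) * hsucc

section Counting
variable {k n : ℕ} (σ : Equiv.Perm (Fin k))

theorem isCopy_and_image_eq_iff (π : Equiv.Perm (Fin n)) {s V : Finset (Fin n)} (hs : #s = k)
    (hV : #V = k) :
    IsCopy σ π s ∧ s.image π = V ↔ ∀ i, π (s.orderEmbOfFin hs i) = V.orderEmbOfFin hV (σ i) := by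
  constructor
  · rintro ⟨⟨_, horder⟩, rfl⟩ i
    have hsorted : (fun j => π (s.orderEmbOfFin hs (σ.symm j))) = (s.image π).orderEmbOfFin hV :=
      orderEmbOfFin_unique hV (fun j => mem_image_of_mem π (s.orderEmbOfFin_mem hs _))
        fun j j' hjj' => by simpa using (horder (σ.symm j) (σ.symm j')).2 (by simpa using hjj')
    simpa using congrFun hsorted (σ i)
  · intro h
    refine ⟨⟨hs, fun i j => ?_⟩, ?_⟩
    · change π (s.orderEmbOfFin hs i) < π (s.orderEmbOfFin hs j) ↔ _
      rw [h, h, OrderEmbedding.lt_iff_lt]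
    · calc s.image π = univ.image (V.orderEmbOfFin hV ∘ σ) := by
            rw [← image_orderEmbOfFin_univ s hs, image_image]
            exact congrArg (image · univ) (funext h)
        _ = V := by rw [← image_image, image_univ_equiv, image_orderEmbOfFin_univ]

theorem card_isCopy_image_eq_apply_eq_of_mem {s V : Finset (Fin n)} (hs : #s = k) (hV : #V = k)
    {i : Fin k} {x : Fin n} (hx : s.orderEmbOfFin hs i = x) (y : Fin n) :
    #{π : Equiv.Perm (Fin n) | (IsCopy σ π s ∧ s.image π = V) ∧ π x = y} =
      if V.orderEmbOfFin hV (σ i) = y then (n - k)! else 0 := by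
  simp_rw [isCopy_and_image_eq_iff σ _ hs hV]
  split_ifs with hy
  · have hforced : ∀ π : Equiv.Perm (Fin n),
        (∀ j, π (s.orderEmbOfFin hs j) = V.orderEmbOfFin hV (σ j)) → π x = y :=
      fun π h => hx ▸ hy ▸ h i
    rw [filter_congr fun π _ => and_iff_left_of_imp (hforced π)]
    have := Equiv.Perm.card_filter_forall_apply_eq (s.orderEmbOfFin hs).injective
      ((V.orderEmbOfFin hV).injective.comp σ.injective)
    rwa [Fintype.card_fin, Fintype.card_fin] at this
  · refine card_eq_zero.2 (filter_eq_empty_iff.2 fun π _ h => hy ?_)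
    rw [← h.2, ← hx, h.1]

theorem card_isCopy_image_eq_apply_eq_of_notMem {s V : Finset (Fin n)} (hs : #s = k)
    (hV : #V = k) {x : Fin n} (hx : x ∉ s) (y : Fin n) :
    #{π : Equiv.Perm (Fin n) | (IsCopy σ π s ∧ s.image π = V) ∧ π x = y} =
      if y ∈ V then 0 else (n - (k + 1))! := by
  simp_rw [isCopy_and_image_eq_iff σ _ hs hV]
  split_ifs with hy
  · refine card_eq_zero.2 (filter_eq_empty_iff.2 fun π _ h => hx ?_)
    obtain ⟨j, rfl⟩ := (V.mem_iff_exists_orderEmbOfFin_eq hV y).1 hy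
    have : π x = π (s.orderEmbOfFin hs (σ.symm j)) := by rw [h.2, h.1, Equiv.apply_symm_apply]
    exact π.injective this ▸ s.orderEmbOfFin_mem hs _
  · have hcons : ∀ π : Equiv.Perm (Fin n),
        ((∀ j, π (s.orderEmbOfFin hs j) = V.orderEmbOfFin hV (σ j)) ∧ π x = y) ↔
          ∀ j, π (Fin.cons (α := fun _ => Fin n) x (s.orderEmbOfFin hs) j) =
            Fin.cons (α := fun _ => Fin n) y (V.orderEmbOfFin hV ∘ σ) j := by
      intro π
      simp [Fin.forall_fin_succ, and_comm]
    rw [filter_congr fun π _ => hcons π]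
    have := Equiv.Perm.card_filter_forall_apply_eq
      (Fin.cons_injective_iff.2 ⟨by simpa using hx, (s.orderEmbOfFin hs).injective⟩)
      (Fin.cons_injective_iff.2 ⟨by simpa using hy,
        (V.orderEmbOfFin hV).injective.comp σ.injective⟩)
    rwa [Fintype.card_fin, Fintype.card_fin] at this

theorem card_powersetCard_filter_mem_card_lt_eq_fAux (y : Fin n) {j : ℕ} (hj : j < k) :
    #{V ∈ powersetCard k (univ : Finset (Fin n)) | y ∈ V ∧ #{b ∈ V | b < y} = j} =
      fAux n k (j + 1) (y + 1) := by
  rw [card_powersetCard_filter_mem_card_lt_eq y hj, Fin.card_Iio, Fin.card_Ioi, fAux,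
    show n - (y + 1) = n - 1 - y by omega, show k - (j + 1) = k - 1 - j by omega]
  simp

theorem card_powersetCard_filter_notMem (y : Fin n) :
    #{V ∈ powersetCard k (univ : Finset (Fin n)) | y ∉ V} = (n - 1).choose k := by
  have : {V ∈ powersetCard k (univ : Finset (Fin n)) | y ∉ V} =
      powersetCard k (univ.erase y) := by
    ext V
    simp only [mem_filter, mem_powersetCard, subset_univ, true_and, subset_erase]
    tauto
  rw [this, card_powersetCard, card_erase_of_mem (mem_univ y), card_univ, Fintype.card_fin]

theorem card_isCopy_apply_eq_eq_sum {s : Finset (Fin n)} (hs : #s = k) (x y : Fin n) :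
    #{π : Equiv.Perm (Fin n) | IsCopy σ π s ∧ π x = y} =
      ∑ V ∈ powersetCard k univ,
        #{π : Equiv.Perm (Fin n) | (IsCopy σ π s ∧ s.image π = V) ∧ π x = y} := by
  rw [card_eq_sum_card_fiberwise (f := fun π : Equiv.Perm (Fin n) => s.image π)
    (t := powersetCard k univ)]
  · simp_rw [filter_filter, and_right_comm]
  · intro π _
    simp [card_image_of_injective _ π.injective, hs]

theorem card_isCopy_apply_eq_of_mem {s : Finset (Fin n)} (hs : #s = k) {i : Fin k} {x : Fin n}
    (hx : s.orderEmbOfFin hs i = x) (y : Fin n) :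
    #{π : Equiv.Perm (Fin n) | IsCopy σ π s ∧ π x = y} = fAux n k (σ i + 1) (y + 1) * (n - k)! := by
  rw [card_isCopy_apply_eq_eq_sum σ hs, sum_congr rfl fun V hV =>
    (card_isCopy_image_eq_apply_eq_of_mem σ hs (mem_powersetCard.1 hV).2 hx y).trans
      (if_congr (orderEmbOfFin_eq_iff V _ _ y) rfl rfl),
    ← sum_filter, sum_const, smul_eq_mul, card_powersetCard_filter_mem_card_lt_eq_fAux y (σ i).2]

theorem card_isCopy_apply_eq_of_notMem {s : Finset (Fin n)} (hs : #s = k) {x : Fin n}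
    (hx : x ∉ s) (y : Fin n) :
    #{π : Equiv.Perm (Fin n) | IsCopy σ π s ∧ π x = y} = (n - 1).choose k * (n - (k + 1))! := by
  rw [card_isCopy_apply_eq_eq_sum σ hs, sum_congr rfl fun V hV =>
    card_isCopy_image_eq_apply_eq_of_notMem σ hs (mem_powersetCard.1 hV).2 hx y,
    sum_ite, sum_const_zero, zero_add, sum_const, smul_eq_mul, card_powersetCard_filter_notMem]

theorem sum_card_isCopy_apply_eq_of_notMem (x y : Fin n) :
    ∑ s ∈ {s ∈ powersetCard k (univ : Finset (Fin n)) | x ∉ s},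
        #{π : Equiv.Perm (Fin n) | IsCopy σ π s ∧ π x = y} =
      (n - 1).choose k * ((n - 1).choose k * (n - (k + 1))!) := by
  rw [sum_congr rfl fun s hs => card_isCopy_apply_eq_of_notMem σ
    (mem_powersetCard.1 (mem_filter.1 hs).1).2 (mem_filter.1 hs).2 y,
    sum_const, smul_eq_mul, card_powersetCard_filter_notMem]

theorem sum_card_isCopy_apply_eq_of_mem (x y : Fin n) :
    ∑ s ∈ {s ∈ powersetCard k (univ : Finset (Fin n)) | x ∈ s},
        #{π : Equiv.Perm (Fin n) | IsCopy σ π s ∧ π x = y} =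
      ∑ i : Fin k, fAux n k (i + 1) (x + 1) * fAux n k (σ i + 1) (y + 1) * (n - k)! := by
  have hrank : ∀ s ∈ {s ∈ powersetCard k (univ : Finset (Fin n)) | x ∈ s},
      #{π : Equiv.Perm (Fin n) | IsCopy σ π s ∧ π x = y} =
        ∑ i : Fin k, if #{b ∈ s | b < x} = i then fAux n k (σ i + 1) (y + 1) * (n - k)! else 0 := by
    intro s hs
    obtain ⟨hsk, hx⟩ := mem_filter.1 hs
    have hs : #s = k := (mem_powersetCard.1 hsk).2
    have hlt : #{b ∈ s | b < x} < k :=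
      hs ▸ card_lt_card (filter_ssubset.2 ⟨x, hx, lt_irrefl x⟩)
    set i₀ : Fin k := ⟨#{b ∈ s | b < x}, hlt⟩
    rw [card_isCopy_apply_eq_of_mem σ hs ((orderEmbOfFin_eq_iff s hs i₀ x).2 ⟨hx, rfl⟩) y,
      Fintype.sum_eq_single i₀ fun i hi => if_neg fun h => hi (Fin.ext h.symm), if_pos rfl]
  rw [sum_congr rfl hrank, sum_comm]
  refine sum_congr rfl fun i _ => ?_
  rw [← sum_filter, sum_const, smul_eq_mul, filter_filter, mul_assoc,
    ← card_powersetCard_filter_mem_card_lt_eq_fAux x i.2]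

theorem sum_ite_apply_eq_numCopies (x y : Fin n) :
    ∑ π : Equiv.Perm (Fin n), (if π x = y then numCopies σ π else 0) =
      (n - 1).choose k * ((n - 1).choose k * (n - (k + 1))!) +
        ∑ i : Fin k, fAux n k (i + 1) (x + 1) * fAux n k (σ i + 1) (y + 1) * (n - k)! := by
  calc ∑ π : Equiv.Perm (Fin n), (if π x = y then numCopies σ π else 0)
      = ∑ π : Equiv.Perm (Fin n), #{s | IsCopy σ π s ∧ π x = y} := by
        refine sum_congr rfl fun π _ => ?_
        by_cases h : π x = y <;> simp [h, numCopies]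
    _ = ∑ s, #{π : Equiv.Perm (Fin n) | IsCopy σ π s ∧ π x = y} := by
        simp only [card_filter]
        exact sum_comm
    _ = ∑ s ∈ powersetCard k univ, #{π : Equiv.Perm (Fin n) | IsCopy σ π s ∧ π x = y} := by
        refine (sum_subset (subset_univ _) fun s _ hs => card_eq_zero.2 ?_).symm
        exact filter_eq_empty_iff.2 fun π _ h => hs (mem_powersetCard.2 ⟨subset_univ s, h.1.1⟩)
    _ = _ := by
        rw [← sum_filter_add_sum_filter_not _ (x ∈ ·), sum_card_isCopy_apply_eq_of_mem,
          sum_card_isCopy_apply_eq_of_notMem, add_comm]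

end Counting

theorem coverEntry_eq_sum_div {k : ℕ} (σ : Equiv.Perm (Fin k)) {n : ℕ} (x y : Fin n) :
    coverEntry σ n x y =
      ((∑ π : Equiv.Perm (Fin n), if π x = y then numCopies σ π else 0 : ℕ) : ℝ) / n.choose k := by
  rw [coverEntry, Nat.cast_sum, sum_div]
  refine sum_congr rfl fun π _ => ?_
  split_ifs <;> simp [density]

theorem stmt_10 (k n : ℕ) (hk : 1 ≤ k) (hkn : k ≤ n) (σ : Equiv.Perm (Fin k)) :
    ∀ x y : Fin n, coverEntry σ n x y =
      ((n - 1).factorial : ℝ) / ((k - 1).factorial : ℝ) * (1 / (k : ℝ) - 1 / (n : ℝ)) +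
        fuzzy σ n (x.val + 1) (y.val + 1) := by
  intro x y
  rw [coverEntry_eq_sum_div, sum_ite_apply_eq_numCopies, Nat.cast_add, add_div,
    Nat.cast_choose_pred_sq_mul_factorial_div_choose hk hkn, fuzzy]
  push_cast
  rw [← sum_mul]
  ring
end
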